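/- arXiv:2401.00509 — 11 statements merged into one kernel-verified Lean document; each statement's English description precedes it below -/
import Mathlib

section
/- Given a partial action θ of a group G on a set X, the relation R on G × X defined by (g,x) R (h,y) iff x ∈ X_{g⁻¹h} and θ_{h⁻¹g}(x) = y is an equivalence relation. -/
/-- A set-theoretic partial action of a group `G` on a set `X`, encoded by a
domain predicate `dom g x` (meaning "`g • x` is defined") and a total map `act`
whose values are only relevant on the domain; axioms (PA1)-(PA3). -/
structure SetPartialAction (G : Type*) (X : Type*) [Group G] where
  dom : G → X → Prop
  act : G → X → X
  dom_one : ∀ x, dom 1 x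
  act_one : ∀ x, act 1 x = x
  dom_inv : ∀ g x, dom g x → dom g⁻¹ (act g x)
  act_inv : ∀ g x, dom g x → act g⁻¹ (act g x) = x
  dom_mul : ∀ g h x, dom h x → dom g (act h x) → dom (g * h) x
  act_mul : ∀ g h x, dom h x → dom g (act h x) → act g (act h x) = act (g * h) x

/-- The enveloping relation on `G × X`: `(g,x) R (h,y)` iff `x ∈ X_{g⁻¹h}`
(i.e. `θ_{h⁻¹g}` is defined at `x`) and `θ_{h⁻¹g}(x) = y`. -/
def envRel {G X : Type*} [Group G] (θ : SetPartialAction G X) :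
    (G × X) → (G × X) → Prop :=
  fun p q => θ.dom (q.1⁻¹ * p.1) p.2 ∧ θ.act (q.1⁻¹ * p.1) p.2 = q.2

/-- The enveloping relation R on G × X is an equivalence relation. -/
theorem stmt2 {G X : Type*} [Group G] (θ : SetPartialAction G X) :
    Equivalence (envRel θ) := by
  constructor
  · intro p
    refine ⟨by simpa using θ.dom_one p.2, by simpa using θ.act_one p.2⟩
  · rintro ⟨g, x⟩ ⟨h, y⟩ ⟨hd, ha⟩
    refine ⟨?_, ?_⟩
    · have := θ.dom_inv (h⁻¹ * g) x hd
      simpa [ha, mul_inv_rev] using this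
    · have := θ.act_inv (h⁻¹ * g) x hd
      simpa [ha, mul_inv_rev] using this
  · rintro ⟨g, x⟩ ⟨h, y⟩ ⟨k, z⟩ ⟨hd1, ha1⟩ ⟨hd2, ha2⟩
    have hd2' : θ.dom (k⁻¹ * h) (θ.act (h⁻¹ * g) x) := by rwa [ha1]
    refine ⟨?_, ?_⟩
    · have := θ.dom_mul (k⁻¹ * h) (h⁻¹ * g) x hd1 hd2'
      simpa [mul_assoc] using this
    · have := θ.act_mul (k⁻¹ * h) (h⁻¹ * g) x hd1 hd2'
      rw [ha1, ha2] at this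
      simpa [mul_assoc] using this.symm
end

section
/- Let θ be a partial action of a group G on a set X, let X_G = (G × X)/R be the quotient by the relation (g,x) R (h,y) iff x ∈ X_{g⁻¹h} and θ_{h⁻¹g}(x) = y, with classes denoted [g,x]. Then μ : G × X_G → X_G, μ(g',[g,x]) = [g'g, x], is a well-defined global action of G on X_G. -/
/-- The map μ(g', [g,x]) = [g'g, x] is a well-defined global action of G on the
enveloping space X_G = (G × X)/R. -/
theorem stmt3 {G X : Type*} [Group G] (θ : SetPartialAction G X) :
    ∃ μ : G → Quot (envRel θ) → Quot (envRel θ),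
      (∀ (g' g : G) (x : X), μ g' (Quot.mk _ (g, x)) = Quot.mk _ (g' * g, x)) ∧
      (∀ z, μ 1 z = z) ∧
      (∀ a b z, μ (a * b) z = μ a (μ b z)) := by
  refine ⟨fun g' => Quot.lift (fun p => Quot.mk _ (g' * p.1, p.2)) ?_, ?_, ?_, ?_⟩
  · intro p q h
    apply Quot.sound
    exact ⟨by simpa [mul_assoc] using h.1, by simpa [mul_assoc] using h.2⟩
  · intro g' g x; rfl
  · intro z
    induction z using Quot.ind with
    | _ p => exact congrArg (Quot.mk _) (by simp)
  · intro a b z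
    induction z using Quot.ind with
    | _ p => exact congrArg (Quot.mk _) (by simp [mul_assoc])
end

section
/- With θ a partial action of group G on set X and X_G its enveloping space, the map ι : X → X_G, ι(x) = [e,x], is injective, and every element of X_G lies in the G-orbit of ι(X) under the enveloping action μ(g,[h,x]) = [gh,x]. -/
lemma envRel_refl {G X : Type*} [Group G] (θ : SetPartialAction G X) (p : G × X) :
    envRel θ p p := by
  refine ⟨?_, ?_⟩ <;> simp [envRel, θ.dom_one, θ.act_one]

lemma envRel_symm {G X : Type*} [Group G] (θ : SetPartialAction G X) {p q : G × X}
    (h : envRel θ p q) : envRel θ q p := by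
  obtain ⟨hd, ha⟩ := h
  have h1 := θ.dom_inv _ _ hd
  have h2 := θ.act_inv _ _ hd
  rw [ha] at h1 h2
  simp only [mul_inv_rev, inv_inv] at h1 h2
  exact ⟨h1, h2⟩

lemma envRel_trans {G X : Type*} [Group G] (θ : SetPartialAction G X) {p q r : G × X}
    (h1 : envRel θ p q) (h2 : envRel θ q r) : envRel θ p r := by
  obtain ⟨hd1, ha1⟩ := h1
  obtain ⟨hd2, ha2⟩ := h2
  rw [← ha1] at hd2 ha2
  have hd := θ.dom_mul _ _ _ hd1 hd2
  have ha := θ.act_mul _ _ _ hd1 hd2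
  rw [ha2] at ha
  have e : r.1⁻¹ * q.1 * (q.1⁻¹ * p.1) = r.1⁻¹ * p.1 := by group
  rw [e] at hd ha
  exact ⟨hd, ha.symm⟩

lemma envRel_of_eqvGen {G X : Type*} [Group G] (θ : SetPartialAction G X) {p q : G × X}
    (h : Relation.EqvGen (envRel θ) p q) : envRel θ p q := by
  induction h with
  | rel _ _ h => exact h
  | refl p => exact envRel_refl θ p
  | symm _ _ _ ih => exact envRel_symm θ ih
  | trans _ _ _ _ _ ih1 ih2 => exact envRel_trans θ ih1 ih2

/-- The map ι : X → X_G, ι(x) = [e,x], is injective, and every element of X_G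
lies in the G-orbit of ι(X) under the enveloping action μ(g,[h,x]) = [gh,x]. -/
theorem stmt4 {G X : Type*} [Group G] (θ : SetPartialAction G X) :
    (Function.Injective fun x : X => Quot.mk (envRel θ) (1, x)) ∧
    (∀ μ : G → Quot (envRel θ) → Quot (envRel θ),
      (∀ (g' g : G) (x : X), μ g' (Quot.mk _ (g, x)) = Quot.mk _ (g' * g, x)) →
      ∀ z : Quot (envRel θ), ∃ (g : G) (x : X), z = μ g (Quot.mk (envRel θ) (1, x))) := by
  constructor
  · intro x y h
    have h' := envRel_of_eqvGen θ (Quot.eq.mp h)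
    obtain ⟨hd, ha⟩ := h'
    simpa [θ.act_one] using ha
  · intro μ hμ z
    induction z using Quot.ind with
    | _ p =>
      refine ⟨p.1, p.2, ?_⟩
      rw [hμ, mul_one]
end

section
/- Let β be a continuous global action of a topological group G on a topological space Y, X an open subset of Y with Y = ⋃_{g∈G} β_g(X), and θ the partial action induced on X by restriction. Then the enveloping space X_G of θ is G-equivariantly homeomorphic to Y. -/
-- The partial action on a subset X of a G-set Y induced by restriction of the
-- global action: X_g = X ∩ g • X, θ_g = (g • ·) restricted.
open Classical in
noncomputable def inducedPA (G Y : Type*) [Group G] [MulAction G Y] (X : Set Y) :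
    SetPartialAction G X where
  dom g x := g • (x : Y) ∈ X
  act g x := if h : g • (x : Y) ∈ X then ⟨g • (x : Y), h⟩ else x
  dom_one x := by simpa using x.2
  act_one x := by
    have h : (1 : G) • (x : Y) ∈ X := by simpa using x.2
    simp [dif_pos h, Subtype.ext_iff]
  dom_inv g x h := by simp [dif_pos h, x.2]
  act_inv g x h := by simp [dif_pos h, x.2, Subtype.ext_iff]
  dom_mul g h x hx hg := by
    simp only [dif_pos hx] at hg
    simpa [mul_smul] using hg
  act_mul g h x hx hg := by
    simp only [dif_pos hx] at hg ⊢
    have : (g * h) • (x : Y) ∈ X := by simpa [mul_smul] using hg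
    simp [dif_pos hg, dif_pos this, Subtype.ext_iff, mul_smul]

/-!
The relation defining `X_G` is exactly the kernel of the action map `(g, x) ↦ g • x` on `G × X`,
and the covering hypothesis makes that map onto `Y`, so it descends to a continuous bijection
`X_G → Y`. The action map `G × Y → Y` is open (its image of `U` is the union over `g` of the
translates by `g` of the open slices of `U`), and so is its restriction to the open set `G × X`;
hence the induced bijection is open, i.e. a homeomorphism.
-/

open Function

section Algebra

variable {G Y : Type*} [Group G] [MulAction G Y] {X : Set Y}

theorem envRel_inducedPA_iff {a b : G × X} :
    envRel (inducedPA G Y X) a b ↔ a.1 • (a.2 : Y) = b.1 • (b.2 : Y) := by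
  simp only [envRel, inducedPA]
  constructor
  · rintro ⟨hdom, hact⟩
    rw [dif_pos hdom] at hact
    rw [← congrArg Subtype.val hact, smul_smul, mul_inv_cancel_left]
  · intro h
    have hb : (b.1⁻¹ * a.1) • (a.2 : Y) = b.2 := by rw [mul_smul, h, inv_smul_smul]
    exact ⟨hb ▸ b.2.2, by rw [dif_pos (hb ▸ b.2.2)]; exact Subtype.ext hb⟩

variable (X) in
def envelopingMap : Quot (envRel (inducedPA G Y X)) → Y :=
  Quot.lift (fun q => q.1 • (q.2 : Y)) fun _ _ => envRel_inducedPA_iff.mp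

theorem envelopingMap_mk (g : G) (x : X) :
    envelopingMap X (Quot.mk _ (g, x)) = g • (x : Y) :=
  rfl

theorem envelopingMap_injective : Injective (envelopingMap (G := G) X) := by
  rintro ⟨a⟩ ⟨b⟩ h
  exact Quot.sound (envRel_inducedPA_iff.mpr h)

theorem envelopingMap_surjective (hcov : ∀ y : Y, ∃ (g : G) (x : X), g • (x : Y) = y) :
    Surjective (envelopingMap (G := G) X) := fun y =>
  let ⟨g, x, hgx⟩ := hcov y
  ⟨Quot.mk _ (g, x), hgx⟩

end Algebra

section Topology

variable {G Y : Type*} [Group G] [TopologicalSpace G] [TopologicalSpace Y] [MulAction G Y]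

theorem isOpenMap_smul_prod [ContinuousConstSMul G Y] :
    IsOpenMap fun q : G × Y => q.1 • q.2 := by
  intro U hU
  have hslices : (fun q : G × Y => q.1 • q.2) '' U =
      ⋃ g : G, (g • ·) '' ((fun y => (g, y)) ⁻¹' U) := by
    ext y
    simp only [Set.mem_image, Set.mem_iUnion, Set.mem_preimage, Prod.exists]
  rw [hslices]
  exact isOpen_iUnion fun g => isOpenMap_smul g _ (hU.preimage (Continuous.prodMk_right g))

theorem continuous_envelopingMap [ContinuousSMul G Y] {X : Set Y} :
    Continuous (envelopingMap (G := G) X) :=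
  continuous_quot_lift _ (by fun_prop)

theorem isOpenMap_envelopingMap [ContinuousConstSMul G Y] {X : Set Y} (hX : IsOpen X) :
    IsOpenMap (envelopingMap (G := G) X) :=
  IsOpenMap.of_comp continuous_quot_mk Quot.mk_surjective
    (isOpenMap_smul_prod.comp (IsOpenMap.id.prodMap hX.isOpenMap_subtype_val))

end Topology

theorem stmt7_general {G Y : Type*} [Group G] [TopologicalSpace G] [TopologicalSpace Y] [MulAction G Y]
    [ContinuousSMul G Y]
    (X : Set Y) (hX : IsOpen X) (hcov : ∀ y : Y, ∃ (g : G) (x : X), g • (x : Y) = y) :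
    ∃ F : Quot (envRel (inducedPA G Y X)) ≃ₜ Y,
      (∀ (g : G) (x : X), F (Quot.mk _ (g, x)) = g • (x : Y)) ∧
      (∀ (g h : G) (x : X),
        F (Quot.mk _ (g * h, x)) = g • F (Quot.mk _ (h, x))) :=
  ⟨(Equiv.ofBijective _ ⟨envelopingMap_injective, envelopingMap_surjective hcov⟩)
      |>.toHomeomorphOfContinuousOpen continuous_envelopingMap (isOpenMap_envelopingMap hX),
    envelopingMap_mk, fun g h x => mul_smul g h (x : Y)⟩

/-- If Y carries a continuous global G-action, X ⊆ Y is open and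
Y = ⋃_{g ∈ G} g • X, then the enveloping space X_G of the induced partial
action is G-equivariantly homeomorphic to Y. -/
theorem stmt7 {G Y : Type*} [Group G] [TopologicalSpace G] [IsTopologicalGroup G]
    [T2Space G] [TopologicalSpace Y] [MulAction G Y] [ContinuousSMul G Y]
    (X : Set Y) (hX : IsOpen X) (hcov : ∀ y : Y, ∃ (g : G) (x : X), g • (x : Y) = y) :
    ∃ F : Quot (envRel (inducedPA G Y X)) ≃ₜ Y,
      (∀ (g : G) (x : X), F (Quot.mk _ (g, x)) = g • (x : Y)) ∧
      (∀ (g h : G) (x : X),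
        F (Quot.mk _ (g * h, x)) = g • F (Quot.mk _ (h, x))) :=
  stmt7_general X hX hcov
end

section
/- Let K be a subgroup of a group G and θ a partial action of K on a set X. Then the map μ_K : G × (G×_K X) → G×_K X, (g', [g,x]_K) ↦ [g'g, x]_K, is a well-defined global action of G on the twisted product G×_K X. -/
/-- A topological partial action: each domain X_g is open and each θ_g is a
homeomorphism of X_{g⁻¹} onto X_g (encoded by continuity of act g on its domain,
the inverse being act g⁻¹). -/
structure TopPartialAction (G X : Type*) [Group G] [TopologicalSpace G]
    [TopologicalSpace X] extends SetPartialAction G X where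
  isOpen_dom : ∀ g, IsOpen {x | dom g x}
  continuousOn_act : ∀ g, ContinuousOn (act g) {x | dom g x}

/-- The twisted-product relation on G × X for a partial action θ of a subgroup
K ≤ G on X: (g,x) ~ (g k⁻¹, θ_k x) for k ∈ K with θ_k x defined.  The twisted
product G ×_K X is the quotient Quot (twRel K θ). -/
def twRel {G X : Type*} [Group G] (K : Subgroup G) (θ : SetPartialAction K X) :
    (G × X) → (G × X) → Prop :=
  fun p q => ∃ k : K, θ.dom k p.2 ∧ q = (p.1 * (k : G)⁻¹, θ.act k p.2)

/-- The map μ_K(g', [g,x]_K) = [g'g, x]_K is a well-defined global action of G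
on the twisted product G ×_K X. -/
theorem stmt8 {G X : Type*} [Group G] (K : Subgroup G) (θ : SetPartialAction K X) :
    ∃ μ : G → Quot (twRel K θ) → Quot (twRel K θ),
      (∀ (g' g : G) (x : X), μ g' (Quot.mk _ (g, x)) = Quot.mk _ (g' * g, x)) ∧
      (∀ z, μ 1 z = z) ∧
      (∀ a b z, μ (a * b) z = μ a (μ b z)) := by
  refine ⟨fun g' => Quot.lift (fun p => Quot.mk _ (g' * p.1, p.2)) ?_, ?_, ?_, ?_⟩
  · rintro p q ⟨k, hk, rfl⟩
    exact Quot.sound ⟨k, hk, by simp [mul_assoc]⟩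
  · intro g' g x; rfl
  · intro z; induction z using Quot.ind with
    | _ p => simp
  · intro a b z; induction z using Quot.ind with
    | _ p => simp [mul_assoc]
end

section
/- Let K be a subgroup of G and θ a partial action of K on X, with ι_K(x) = [e,x]_K ∈ G×_K X. Then ι_K is isotropy-preserving: for every x ∈ X, the isotropy group K_x = {k ∈ K : θ(k,x) defined and θ(k,x) = x} equals the isotropy group of ι_K(x) in K under the action μ_K(k,[g,x]_K) = [kg,x]_K. -/
lemma twRel_equiv {G X : Type*} [Group G] (K : Subgroup G) (θ : SetPartialAction K X) :
    Equivalence (twRel K θ) := by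
  constructor
  · intro p
    exact ⟨1, θ.dom_one _, by simp [θ.act_one]⟩
  · rintro ⟨g, x⟩ q ⟨k, hd, rfl⟩
    refine ⟨k⁻¹, θ.dom_inv k x hd, ?_⟩
    simp [θ.act_inv k x hd]
  · rintro ⟨g, x⟩ q r ⟨k, hd, rfl⟩ ⟨k', hd', rfl⟩
    refine ⟨k' * k, θ.dom_mul k' k x hd hd', ?_⟩
    simp [θ.act_mul k' k x hd hd', mul_assoc]

/-- ι_K is isotropy-preserving: for every x, the isotropy group
K_x = {k ∈ K : θ(k,x) defined and θ(k,x) = x} equals the isotropy group of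
ι_K(x) = [e,x]_K in K under μ_K(k, [g,x]_K) = [kg,x]_K. -/
theorem stmt10 {G X : Type*} [Group G] (K : Subgroup G) (θ : SetPartialAction K X)
    (x : X) :
    {k : K | θ.dom k x ∧ θ.act k x = x} =
      {k : K | Quot.mk (twRel K θ) ((k : G), x) = Quot.mk (twRel K θ) (1, x)} := by
  ext k
  simp only [Set.mem_setOf_eq]
  constructor
  · rintro ⟨hd, he⟩
    apply Quot.sound
    exact ⟨k, hd, by simp [he]⟩
  · intro h
    have := (twRel_equiv K θ).eqvGen_iff.mp (Quot.eq.mp h)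
    obtain ⟨k', hd', heq⟩ := this
    have h1 : (1 : G) = (k : G) * (k' : G)⁻¹ := congrArg Prod.fst heq
    have hk : k' = k := by
      ext
      have h2 : (k : G) * (k' : G)⁻¹ = 1 := h1.symm
      have := mul_inv_eq_one.mp h2
      exact this.symm
    subst hk
    exact ⟨hd', (congrArg Prod.snd heq).symm⟩
end

section
/- Let K be a subgroup of a topological group G and θ a continuous topological partial action of K on a space X. Then ι_K : X → ι_K(X) ⊆ G×_K X, x ↦ [e,x]_K, is a homeomorphism onto its image. -/
lemma sat_open {G X : Type*} [Group G] [TopologicalSpace G] [IsTopologicalGroup G]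
    [TopologicalSpace X] (K : Subgroup G) (θ : TopPartialAction K X)
    {O : Set (G × X)} (hO : IsOpen O) :
    IsOpen {q | ∃ p ∈ O, twRel K θ.toSetPartialAction p q} := by
  have hrw : {q | ∃ p ∈ O, twRel K θ.toSetPartialAction p q} =
      ⋃ k : K, ((fun q : G × X => q.2) ⁻¹' {x | θ.dom k⁻¹ x}) ∩
        ((fun q : G × X => (q.1 * (k : G), θ.act k⁻¹ q.2)) ⁻¹' O) := by
    ext q
    simp only [Set.mem_setOf_eq, Set.mem_iUnion, Set.mem_inter_iff, Set.mem_preimage]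
    constructor
    · rintro ⟨p, hp, k, hk, rfl⟩
      refine ⟨k, θ.dom_inv k p.2 hk, ?_⟩
      have hfst : p.1 * (k : G)⁻¹ * (k : G) = p.1 := inv_mul_cancel_right _ _
      show (p.1 * (k : G)⁻¹ * (k : G), θ.act k⁻¹ (θ.act k p.2)) ∈ O
      rw [hfst, θ.act_inv k p.2 hk]
      exact hp
    · rintro ⟨k, hk, hmem⟩
      refine ⟨(q.1 * (k : G), θ.act k⁻¹ q.2), hmem, k, ?_, ?_⟩
      · have := θ.dom_inv k⁻¹ q.2 hk
        simpa using this
      · have h1 := θ.act_inv k⁻¹ q.2 hk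
        simp only [inv_inv] at h1
        simp [h1, mul_assoc]
  rw [hrw]
  refine isOpen_iUnion fun k => ?_
  have hs : IsOpen ((fun q : G × X => q.2) ⁻¹' {x | θ.dom k⁻¹ x}) :=
    (θ.isOpen_dom k⁻¹).preimage continuous_snd
  have hf : ContinuousOn (fun q : G × X => (q.1 * (k : G), θ.act k⁻¹ q.2))
      ((fun q : G × X => q.2) ⁻¹' {x | θ.dom k⁻¹ x}) := by
    apply ContinuousOn.prodMk
    · exact (continuous_fst.mul continuous_const).continuousOn
    · exact (θ.continuousOn_act k⁻¹).comp continuous_snd.continuousOn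
        (fun q hq => hq)
  exact hf.isOpen_inter_preimage hs hO

/-- For a continuous topological partial action of K ≤ G on X, the map
ι_K : X → G ×_K X, x ↦ [e,x]_K, is a homeomorphism onto its image, i.e. a
topological embedding. -/
theorem stmt11 {G X : Type*} [Group G] [TopologicalSpace G] [IsTopologicalGroup G]
    [T2Space G] [TopologicalSpace X] (K : Subgroup G) (θ : TopPartialAction K X)
    (hcont : ContinuousOn (fun p : K × X => θ.act p.1 p.2) {p : K × X | θ.dom p.1 p.2}) :
    Topology.IsEmbedding
      (fun x : X => Quot.mk (twRel K θ.toSetPartialAction) (1, x)) := by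
  have heqv := twRel_equiv K θ.toSetPartialAction
  set R := twRel K θ.toSetPartialAction with hR
  have hmkeq : ∀ p q : G × X, Quot.mk R p = Quot.mk R q ↔ R p q := by
    intro p q
    rw [Quot.eq]
    exact heqv.eqvGen_iff
  have hinj : Function.Injective (fun x : X => Quot.mk R ((1 : G), x)) := by
    intro x y hxy
    obtain ⟨k, hk, heq⟩ := (hmkeq _ _).mp hxy
    have h1 : ((1 : G), y).1 = (1 : G) * (k : G)⁻¹ := by rw [heq]
    simp only [one_mul] at h1
    have hk1 : k = 1 := by
      ext
      have := congrArg (·⁻¹) h1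
      simpa using this.symm
    subst hk1
    have h2 : ((1 : G), y).2 = θ.act 1 x := by rw [heq]
    simpa [θ.act_one] using h2.symm
  have hcont' : Continuous (fun x : X => Quot.mk R ((1 : G), x)) :=
    continuous_quot_mk.comp (Continuous.prodMk_right 1)
  refine ⟨⟨le_antisymm hcont'.le_induced ?_⟩, hinj⟩
  intro U hU
  rw [isOpen_induced_iff]
  -- pointwise construction of an open set of the quotient pulling back into U
  have key : ∀ x ∈ U, ∃ W : Set (Quot R), IsOpen W ∧ Quot.mk R ((1 : G), x) ∈ W ∧
      (fun x' : X => Quot.mk R ((1 : G), x')) ⁻¹' W ⊆ U := by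
    intro x hxU
    have hx := hcont ((1 : K), x) (θ.dom_one x)
    have hxact : θ.act (1 : K) x = x := θ.act_one x
    have hUmem : U ∈ nhds ((fun p : K × X => θ.act p.1 p.2) ((1 : K), x)) := by
      simpa [hxact] using hU.mem_nhds hxU
    have hpre := hx hUmem
    rw [Filter.mem_map, mem_nhdsWithin] at hpre
    obtain ⟨T, hTopen, hT1x, hTsub⟩ := hpre
    obtain ⟨A, B, hAopen, hBopen, h1A, hxB, hABsub⟩ :=
      isOpen_prod_iff.mp hTopen (1 : K) x hT1x
    obtain ⟨A', hA'open, hA'pre⟩ := isOpen_induced_iff.mp hAopen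
    refine ⟨Quot.mk R '' (A' ×ˢ B), ?_, ?_, ?_⟩
    · rw [isOpen_coinduced]
      have : Quot.mk R ⁻¹' (Quot.mk R '' (A' ×ˢ B)) =
          {q | ∃ p ∈ A' ×ˢ B, R p q} := by
        ext q
        simp only [Set.mem_preimage, Set.mem_image, Set.mem_setOf_eq]
        constructor
        · rintro ⟨p, hp, hpq⟩; exact ⟨p, hp, (hmkeq p q).mp hpq⟩
        · rintro ⟨p, hp, hpq⟩; exact ⟨p, hp, (hmkeq p q).mpr hpq⟩
      rw [this]
      exact sat_open K θ (hA'open.prod hBopen)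
    · refine ⟨((1 : G), x), ?_, rfl⟩
      refine Set.mk_mem_prod ?_ hxB
      have : ((1 : K) : G) ∈ A' := by
        have : (1 : K) ∈ Subtype.val ⁻¹' A' := by rw [hA'pre]; exact h1A
        exact this
      simpa using this
    · intro x' hx'
      obtain ⟨p, hp, hpq⟩ := hx'
      have hrel : R ((1 : G), x') p := heqv.symm ((hmkeq p _).mp hpq)
      obtain ⟨k, hk, hpe⟩ := hrel
      subst hpe
      have hpA' : ((k : G))⁻¹ ∈ A' := by simpa using hp.1
      have hpB : θ.act k x' ∈ B := hp.2
      have hkinvA : k⁻¹ ∈ A := by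
        rw [← hA'pre]
        simpa using hpA'
      have hmemT : ((k⁻¹ : K), θ.act k x') ∈ T :=
        hABsub (Set.mk_mem_prod hkinvA hpB)
      have hdom : θ.dom (k⁻¹ : K) (θ.act k x') := θ.dom_inv k x' hk
      have := hTsub ⟨hmemT, hdom⟩
      simpa [θ.act_inv k x' hk] using this
  choose W hWopen hWmem hWsub using key
  refine ⟨⋃ x, ⋃ h : x ∈ U, W x h, isOpen_iUnion fun x => isOpen_iUnion fun h => hWopen x h, ?_⟩
  ext x'
  simp only [Set.mem_preimage, Set.mem_iUnion]
  constructor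
  · rintro ⟨x, hx, hW⟩
    exact hWsub x hx hW
  · intro hx'
    exact ⟨x', hx', hWmem x' hx'⟩
end

section
/- Let K be a subgroup of a topological group G and θ a topological partial action of K on X. Then ι_K(X) is open (respectively closed) in the twisted product G×_K X if and only if the domain K*X is open (respectively closed) in G×X. -/
/-- ι_K(X) is open (resp. closed) in the twisted product G ×_K X if and only if
the domain K*X is open (resp. closed) in G × X. -/
theorem stmt12 {G X : Type*} [Group G] [TopologicalSpace G] [IsTopologicalGroup G]
    [T2Space G] [TopologicalSpace X] (K : Subgroup G) (θ : TopPartialAction K X) :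
    (IsOpen (Set.range fun x : X => Quot.mk (twRel K θ.toSetPartialAction) (1, x)) ↔
      IsOpen {p : G × X | ∃ k : K, (k : G) = p.1 ∧ θ.dom k p.2}) ∧
    (IsClosed (Set.range fun x : X => Quot.mk (twRel K θ.toSetPartialAction) (1, x)) ↔
      IsClosed {p : G × X | ∃ k : K, (k : G) = p.1 ∧ θ.dom k p.2}) := by
  set r := twRel K θ.toSetPartialAction with hr
  set S : Set (G × X) := {p : G × X | ∃ k : K, (k : G) = p.1 ∧ θ.dom k p.2} with hS
  -- invariance of S under the relation r
  have inv : ∀ p q : G × X, r p q → (p ∈ S ↔ q ∈ S) := by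
    rintro p q ⟨k0, hk0, rfl⟩
    constructor
    · rintro ⟨k, hk, hdk⟩
      refine ⟨k * k0⁻¹, by simp [hk], ?_⟩
      apply θ.dom_mul
      · exact θ.dom_inv k0 _ hk0
      · rw [θ.act_inv k0 _ hk0]; exact hdk
    · rintro ⟨k', hk', hdk'⟩
      refine ⟨k' * k0, by simp [hk'], ?_⟩
      exact θ.dom_mul k' k0 _ hk0 hdk'
  have invGen : ∀ p q : G × X, Relation.EqvGen r p q → (p ∈ S ↔ q ∈ S) := by
    intro p q h
    induction h with
    | rel a b hab => exact inv a b hab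
    | refl a => rfl
    | symm a b _ ih => exact ih.symm
    | trans a b c _ _ ih1 ih2 => exact ih1.trans ih2
  -- the preimage of the range of ι under Quot.mk is S
  have key : (Quot.mk r) ⁻¹' (Set.range fun x : X => Quot.mk r (1, x)) = S := by
    ext p
    constructor
    · rintro ⟨y, hy⟩
      have h := Quot.eqvGen_exact hy.symm
      exact (invGen _ _ h).mpr ⟨1, by simp, θ.dom_one y⟩
    · rintro ⟨k, hk, hdk⟩
      refine ⟨θ.act k p.2, ?_⟩
      have : r p (p.1 * (k : G)⁻¹, θ.act k p.2) := ⟨k, hdk, rfl⟩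
      have h1 : Quot.mk r p = Quot.mk r (p.1 * (k : G)⁻¹, θ.act k p.2) :=
        Quot.sound this
      rw [h1, ← hk]
      simp
  constructor
  · constructor
    · intro h
      have := h.preimage (continuous_quot_mk (r := r))
      rwa [key] at this
    · intro h
      rw [isOpen_coinduced (f := Quot.mk r)] at *
      rwa [key]
  · constructor
    · intro h
      have := h.preimage (continuous_quot_mk (r := r))
      rwa [key] at this
    · intro h
      rw [← isOpen_compl_iff] at *
      rw [isOpen_coinduced (f := Quot.mk r), Set.preimage_compl, key]
      exact h
end

section
/- Let K be a subgroup of G and θ a topological partial action of K on X. Then G×_K(X_K) is G-equivariantly homeomorphic to G×_K X, where X_K = K×_K X is the enveloping space of θ. -/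
/-- The twisted-product relation on G × X_K, where X_K = K ×_K X is the
enveloping space of θ carrying the enveloping (global) K-action
k • [h,x] = [kh,x]: (g,z) ~ (g k⁻¹, k • z). -/
def twRelEnv {G X : Type*} [Group G] (K : Subgroup G) (θ : SetPartialAction K X) :
    (G × Quot (envRel θ)) → (G × Quot (envRel θ)) → Prop :=
  fun p q => ∃ (k h : K) (x : X), p.2 = Quot.mk (envRel θ) (h, x) ∧
    q = (p.1 * (k : G)⁻¹, Quot.mk (envRel θ) (k * h, x))

/-!
The homeomorphism is `[g, [h, x]] ↦ [g h, x]`, with inverse `[g, x] ↦ [g, [1, x]]`.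
The inverse is obviously continuous. For the forward map one needs
`G × (K × X) → G × X_K` to be a quotient map, which holds because the quotient map
`K × X → X_K` is open: the saturation of an open set `W` is the union over `k` of the
images of `W ∩ (K × X_k)` under the partial homeomorphisms `(h, x) ↦ (h k⁻¹, θ_k x)`.
-/

open Topology

section EnvelopingSpace

variable {H X : Type*} [Group H]

theorem envRel_equivalence (θ : SetPartialAction H X) : Equivalence (envRel θ) where
  refl p := ⟨by simpa using θ.dom_one p.2, by simpa using θ.act_one p.2⟩
  symm := by
    rintro ⟨h, x⟩ ⟨h', x'⟩ ⟨hd, ha⟩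
    dsimp only at hd ha
    subst ha
    exact ⟨by simpa using θ.dom_inv _ _ hd,
      by simpa using θ.act_inv _ _ hd⟩
  trans := by
    rintro ⟨h, x⟩ ⟨h', x'⟩ ⟨h'', x''⟩ ⟨hd₁, ha₁⟩ ⟨hd₂, ha₂⟩
    dsimp only at hd₁ ha₁ hd₂ ha₂
    subst ha₁ ha₂
    have hmul : h''⁻¹ * h' * (h'⁻¹ * h) = h''⁻¹ * h := by group
    exact ⟨hmul ▸ θ.dom_mul _ _ _ hd₁ hd₂, hmul ▸ (θ.act_mul _ _ _ hd₁ hd₂).symm⟩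

theorem envRel_of_mk_eq_mk {θ : SetPartialAction H X} {p q : H × X}
    (h : Quot.mk (envRel θ) p = Quot.mk (envRel θ) q) : envRel θ p q :=
  (envRel_equivalence θ).eqvGen_iff.1 (Quot.eqvGen_exact h)

def envShift (θ : SetPartialAction H X) (k : H) (p : H × X) : H × X :=
  (p.1 * k⁻¹, θ.act k p.2)

theorem envRel_envShift (θ : SetPartialAction H X) {k : H} {p : H × X}
    (hp : θ.dom k p.2) : envRel θ p (envShift θ k p) :=
  ⟨by simpa [envShift, mul_assoc] using hp, by simp [envShift]⟩

theorem envShift_inv_envShift (θ : SetPartialAction H X) {k : H} {p : H × X}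
    (hp : θ.dom k p.2) : envShift θ k⁻¹ (envShift θ k p) = p := by
  simp [envShift, θ.act_inv _ _ hp]

theorem image_envShift (θ : SetPartialAction H X) {k : H} {U : Set (H × X)}
    (hU : U ⊆ {p | θ.dom k p.2}) :
    envShift θ k '' U = {p | θ.dom k⁻¹ p.2} ∩ envShift θ k⁻¹ ⁻¹' U := by
  ext p
  constructor
  · rintro ⟨q, hq, rfl⟩
    exact ⟨θ.dom_inv _ _ (hU hq), by rwa [Set.mem_preimage, envShift_inv_envShift θ (hU hq)]⟩
  · rintro ⟨hp, hpU⟩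
    refine ⟨envShift θ k⁻¹ p, hpU, ?_⟩
    simpa using envShift_inv_envShift θ (k := k⁻¹) hp

theorem preimage_image_mk_envRel (θ : SetPartialAction H X) (W : Set (H × X)) :
    Quot.mk (envRel θ) ⁻¹' (Quot.mk (envRel θ) '' W) =
      ⋃ k, envShift θ k '' (W ∩ {p | θ.dom k p.2}) := by
  ext p
  simp only [Set.mem_preimage, Set.mem_image, Set.mem_iUnion, Set.mem_inter_iff]
  constructor
  · rintro ⟨q, hq, hqp⟩
    obtain ⟨hd, ha⟩ := envRel_of_mk_eq_mk hqp
    exact ⟨p.1⁻¹ * q.1, q, ⟨hq, hd⟩, Prod.ext (by simp [envShift]) ha⟩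
  · rintro ⟨k, q, ⟨hq, hd⟩, rfl⟩
    exact ⟨q, hq, Quot.sound (envRel_envShift θ hd)⟩

variable [TopologicalSpace H] [ContinuousMul H] [TopologicalSpace X]

theorem continuousOn_envShift (θ : TopPartialAction H X) (k : H) :
    ContinuousOn (envShift θ.toSetPartialAction k) {p | θ.dom k p.2} :=
  ((continuous_mul_const k⁻¹).comp continuous_fst).continuousOn.prodMk
    ((θ.continuousOn_act k).comp continuousOn_snd fun _ hp => hp)

theorem isOpen_image_envShift (θ : TopPartialAction H X) (k : H) {U : Set (H × X)}
    (hU : IsOpen U) (hUd : U ⊆ {p | θ.dom k p.2}) :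
    IsOpen (envShift θ.toSetPartialAction k '' U) := by
  rw [image_envShift _ hUd]
  exact (continuousOn_envShift θ k⁻¹).isOpen_inter_preimage
    ((θ.isOpen_dom k⁻¹).preimage continuous_snd) hU

theorem isOpenMap_mk_envRel (θ : TopPartialAction H X) :
    IsOpenMap (Quot.mk (envRel θ.toSetPartialAction)) := by
  intro W hW
  rw [← isQuotientMap_quot_mk.isOpen_preimage, preimage_image_mk_envRel]
  exact isOpen_iUnion fun k => isOpen_image_envShift θ k
    (hW.inter ((θ.isOpen_dom k).preimage continuous_snd)) Set.inter_subset_right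

end EnvelopingSpace

section TwistedProduct

variable {G X : Type*} [Group G] (K : Subgroup G)

def envToTwisted (θ : SetPartialAction K X) (g : G) : Quot (envRel θ) → Quot (twRel K θ) :=
  Quot.lift (fun q : K × X => Quot.mk (twRel K θ) (g * q.1, q.2)) <| by
    rintro ⟨h, x⟩ ⟨h', x'⟩ ⟨hd, ha⟩
    dsimp only at hd ha
    subst ha
    refine Quot.sound ⟨h'⁻¹ * h, hd, ?_⟩
    simp [mul_assoc]

def twistedEnvEquiv (θ : SetPartialAction K X) : Quot (twRelEnv K θ) ≃ Quot (twRel K θ) where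
  toFun := Quot.lift (fun p => envToTwisted K θ p.1 p.2) <| by
    rintro ⟨g, _⟩ _ ⟨k, h, x, rfl, rfl⟩
    show Quot.mk _ (g * h, x) = Quot.mk _ (g * (k : G)⁻¹ * (k * h : K), x)
    simp [mul_assoc]
  invFun := Quot.lift (fun p => Quot.mk _ (p.1, Quot.mk (envRel θ) (1, p.2))) <| by
    rintro ⟨g, x⟩ _ ⟨k, hd, rfl⟩
    have henv : Quot.mk (envRel θ) (1, θ.act k x) = Quot.mk (envRel θ) (k * 1, x) :=
      (Quot.sound ⟨by simpa using hd, by simp⟩).symm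
    show Quot.mk _ (g, Quot.mk _ (1, x)) = Quot.mk _ (g * (k : G)⁻¹, Quot.mk _ (1, θ.act k x))
    rw [henv]
    exact Quot.sound ⟨k, 1, x, rfl, rfl⟩
  left_inv := by
    rintro ⟨g, ⟨h, x⟩⟩
    show Quot.mk _ (g * (h : G), Quot.mk _ (1, x)) = Quot.mk _ (g, Quot.mk _ (h, x))
    exact (Quot.sound ⟨h⁻¹, h, x, rfl, by simp⟩).symm
  right_inv := by
    rintro ⟨g, x⟩
    show Quot.mk _ (g * ((1 : K) : G), x) = Quot.mk _ (g, x)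
    simp

variable [TopologicalSpace G] [TopologicalSpace X] (θ : TopPartialAction K X)

theorem continuous_twistedEnvEquiv [IsTopologicalGroup G] :
    Continuous (twistedEnvEquiv K θ.toSetPartialAction) := by
  have hq : IsQuotientMap (Prod.map (id : G → G) (Quot.mk (envRel θ.toSetPartialAction))) :=
    (IsOpenMap.id.prodMap (isOpenMap_mk_envRel θ)).isQuotientMap
      (continuous_id.prodMap continuous_quot_mk)
      (Function.surjective_id.prodMap Quot.mk_surjective)
  rw [isQuotientMap_quot_mk.continuous_iff, hq.continuous_iff]
  exact continuous_quot_mk.comp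
    (by fun_prop : Continuous fun p : G × K × X => (p.1 * (p.2.1 : G), p.2.2))

theorem continuous_twistedEnvEquiv_symm :
    Continuous (twistedEnvEquiv K θ.toSetPartialAction).symm :=
  continuous_quot_lift _ <| continuous_quot_mk.comp <|
    continuous_fst.prodMk (continuous_quot_mk.comp (continuous_const.prodMk continuous_snd))

end TwistedProduct

theorem stmt14_general {G X : Type*} [Group G] [TopologicalSpace G] [IsTopologicalGroup G]
    [TopologicalSpace X] (K : Subgroup G) (θ : TopPartialAction K X) :
    ∃ F : Quot (twRelEnv K θ.toSetPartialAction) ≃ₜ Quot (twRel K θ.toSetPartialAction),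
      ∀ (g : G) (h : K) (x : X),
        F (Quot.mk _ (g, Quot.mk (envRel θ.toSetPartialAction) (h, x))) =
          Quot.mk (twRel K θ.toSetPartialAction) (g * (h : G), x) :=
  ⟨{ toEquiv := twistedEnvEquiv K θ.toSetPartialAction
     continuous_toFun := continuous_twistedEnvEquiv K θ
     continuous_invFun := continuous_twistedEnvEquiv_symm K θ },
    fun _ _ _ => rfl⟩

/-- G ×_K (X_K) is G-equivariantly homeomorphic to G ×_K X via
[g, [h,x]] ↦ [gh, x]. -/
theorem stmt14 {G X : Type*} [Group G] [TopologicalSpace G] [IsTopologicalGroup G]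
    [T2Space G] [TopologicalSpace X] (K : Subgroup G) (θ : TopPartialAction K X) :
    ∃ F : Quot (twRelEnv K θ.toSetPartialAction) ≃ₜ Quot (twRel K θ.toSetPartialAction),
      ∀ (g : G) (h : K) (x : X),
        F (Quot.mk _ (g, Quot.mk (envRel θ.toSetPartialAction) (h, x))) =
          Quot.mk (twRel K θ.toSetPartialAction) (g * (h : G), x) :=
  stmt14_general K θ
end

section
/- Let K be a subgroup of a topological group G. The twisted product functor G×_K− from the category of K-spaces with continuous partial K-actions and K-maps to the category of G-spaces with global actions is left adjoint to the restriction functor res^G_K. Concretely: for every partial K-space X and global G-space Y, the map λ : Hom_G(G×_K X, Y) → Hom_K(X, res^G_K Y), f ↦ f ∘ ι_K, is a bijection natural in X and Y, with inverse τ(f)([g,x]_K) = g·f(x). -/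
/-- The twisted product functor G ×_K − is left adjoint to restriction
res^G_K: for every partial K-space X and global G-space Y, the map
λ : Hom_G(G ×_K X, Y) → Hom_K(X, res^G_K Y), f ↦ f ∘ ι_K, is well defined and
bijective with inverse τ(h)([g,x]_K) = g • h(x), naturally in X and Y. -/
theorem stmt15 {G : Type*} [Group G] [TopologicalSpace G] [IsTopologicalGroup G]
    [T2Space G] (K : Subgroup G)
    {X : Type*} [TopologicalSpace X] (θ : TopPartialAction K X)
    (hcont : ContinuousOn (fun p : K × X => θ.act p.1 p.2) {p : K × X | θ.dom p.1 p.2})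
    {Y : Type*} [TopologicalSpace Y] [MulAction G Y] [ContinuousSMul G Y] :
    -- notation: a G-map out of the twisted product
    (∀ GMap : (Quot (twRel K θ.toSetPartialAction) → Y) → Prop,
     (∀ f, GMap f ↔ Continuous f ∧ ∀ (g' g : G) (x : X),
        f (Quot.mk _ (g' * g, x)) = g' • f (Quot.mk _ (g, x))) →
     ∀ KMap : (X → Y) → Prop,
     (∀ h, KMap h ↔ Continuous h ∧ ∀ (k : K) (x : X),
        θ.dom k x → h (θ.act k x) = (k : G) • h x) →
      -- λ is well defined:
      (∀ f, GMap f →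
        KMap (f ∘ fun x : X => Quot.mk (twRel K θ.toSetPartialAction) (1, x))) ∧
      -- λ is injective:
      (∀ f f', GMap f → GMap f' →
        (f ∘ fun x : X => Quot.mk (twRel K θ.toSetPartialAction) (1, x)) =
          (f' ∘ fun x : X => Quot.mk (twRel K θ.toSetPartialAction) (1, x)) →
        f = f') ∧
      -- λ is surjective, with explicit inverse τ(h)([g,x]_K) = g • h x:
      (∀ h, KMap h → ∃ f, GMap f ∧
        (∀ (g : G) (x : X), f (Quot.mk (twRel K θ.toSetPartialAction) (g, x)) = g • h x) ∧
        (f ∘ fun x : X => Quot.mk (twRel K θ.toSetPartialAction) (1, x)) = h)) ∧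
    -- naturality in Y: for a G-map s : Y → Y', λ(s ∘ f) = s ∘ λ(f)
    (∀ {Y' : Type} [TopologicalSpace Y'] [MulAction G Y'] [ContinuousSMul G Y']
      (s : Y → Y'), Continuous s → (∀ (g : G) (y : Y), s (g • y) = g • s y) →
      ∀ f : Quot (twRel K θ.toSetPartialAction) → Y,
        ((s ∘ f) ∘ fun x : X => Quot.mk (twRel K θ.toSetPartialAction) (1, x)) =
          s ∘ (f ∘ fun x : X => Quot.mk (twRel K θ.toSetPartialAction) (1, x))) ∧
    -- naturality in X: for a K-map r : X' → X and the induced G-map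
    -- G ×_K r : [g,x']_K ↦ [g, r x']_K, λ(f ∘ (G ×_K r)) = λ(f) ∘ r
    (∀ {X' : Type} [TopologicalSpace X'] (θ' : TopPartialAction K X')
      (r : X' → X), Continuous r →
      (∀ (k : K) (x' : X'), θ'.dom k x' →
        θ.dom k (r x') ∧ r (θ'.act k x') = θ.act k (r x')) →
      ∀ F : Quot (twRel K θ'.toSetPartialAction) → Quot (twRel K θ.toSetPartialAction),
      (∀ (g : G) (x' : X'), F (Quot.mk (twRel K θ'.toSetPartialAction) (g, x')) =
        Quot.mk (twRel K θ.toSetPartialAction) (g, r x')) →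
      ∀ f : Quot (twRel K θ.toSetPartialAction) → Y,
        ((f ∘ F) ∘ fun x' : X' => Quot.mk (twRel K θ'.toSetPartialAction) (1, x')) =
          (f ∘ fun x : X => Quot.mk (twRel K θ.toSetPartialAction) (1, x)) ∘ r) := by
  constructor
  · intro GMap hG KMap hK
    refine ⟨?_, ?_, ?_⟩
    · intro f hf
      obtain ⟨hfc, hfe⟩ := (hG f).1 hf
      rw [hK]
      constructor
      · exact hfc.comp (continuous_quot_mk.comp (by continuity))
      · intro k x hk
        have hq : Quot.mk (twRel K θ.toSetPartialAction) ((k : G), x) =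
            Quot.mk (twRel K θ.toSetPartialAction) (1, θ.act k x) := by
          apply Quot.sound
          exact ⟨k, hk, by simp⟩
        have := hfe (k : G) 1 x
        simp only [mul_one] at this
        simpa [Function.comp, ← hq] using this
    · intro f f' hf hf' hEq
      obtain ⟨_, hfe⟩ := (hG f).1 hf
      obtain ⟨_, hf'e⟩ := (hG f').1 hf'
      funext q
      induction q using Quot.ind with
      | _ p =>
        obtain ⟨g, x⟩ := p
        have h1 : f (Quot.mk _ (g, x)) = g • f (Quot.mk _ (1, x)) := by
          have := hfe g 1 x; simpa using this
        have h2 : f' (Quot.mk _ (g, x)) = g • f' (Quot.mk _ (1, x)) := by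
          have := hf'e g 1 x; simpa using this
        have h3 : f (Quot.mk _ (1, x)) = f' (Quot.mk _ (1, x)) :=
          congrFun hEq x
        rw [h1, h2, h3]
    · intro h hh
      obtain ⟨hhc, hhe⟩ := (hK h).1 hh
      have hsound : ∀ p q, twRel K θ.toSetPartialAction p q →
          (fun p : G × X => p.1 • h p.2) p = (fun p : G × X => p.1 • h p.2) q := by
        rintro ⟨g, x⟩ ⟨g', y⟩ ⟨k, hk, heq⟩
        obtain ⟨h1, h2⟩ := Prod.mk.injEq .. ▸ heq
        subst h1; subst h2
        simp only
        rw [hhe k x hk, smul_smul, inv_mul_cancel_right]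
      refine ⟨Quot.lift (fun p : G × X => p.1 • h p.2) hsound, ?_, ?_, ?_⟩
      · rw [hG]
        constructor
        · exact continuous_quot_lift _ (continuous_fst.smul (hhc.comp continuous_snd))
        · intro g' g x
          simp [mul_smul]
      · intro g x; rfl
      · funext x; simp [Function.comp]
  constructor
  · intro Y' _ _ _ s _ _ f
    rfl
  · intro X' _ θ' r _ _ F hF f
    funext x'
    simp [Function.comp, hF]
end

section
/- Let θ be a continuous partial action of a topological group G on a topological space X. If X is G-contractible (there is a G-equivariant homotopy H : X × I → X with H₁ = id and H₀ constant equal to a fixed point w), then the enveloping space X_G is G-contractible with respect to the enveloping action. -/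
/-- If a continuous partial G-space X is G-contractible (there is a
G-equivariant homotopy H : X × I → X with H₁ = id and H₀ constantly equal to a
fixed point w), then the enveloping space X_G is G-contractible with respect to
the enveloping action μ(g,[h,x]) = [gh,x], contracting to the fixed point [e,w]. -/
theorem stmt19 {G X : Type*} [Group G] [TopologicalSpace G] [IsTopologicalGroup G]
    [T2Space G] [TopologicalSpace X] (θ : TopPartialAction G X)
    (hcont : ContinuousOn (fun p : G × X => θ.act p.1 p.2) {p : G × X | θ.dom p.1 p.2})
    (w : X) (hw : ∀ g : G, θ.dom g w ∧ θ.act g w = w)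
    (H : X × unitInterval → X) (Hcont : Continuous H)
    (H1 : ∀ x, H (x, 1) = x) (H0 : ∀ x, H (x, 0) = w)
    (Hequiv : ∀ (g : G) (x : X) (t : unitInterval), θ.dom g x →
      θ.dom g (H (x, t)) ∧ H (θ.act g x, t) = θ.act g (H (x, t))) :
    ∃ μ : G → Quot (envRel θ.toSetPartialAction) → Quot (envRel θ.toSetPartialAction),
      (∀ (g' g : G) (x : X), μ g' (Quot.mk _ (g, x)) = Quot.mk _ (g' * g, x)) ∧
      (∀ g : G, μ g (Quot.mk (envRel θ.toSetPartialAction) (1, w)) =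
        Quot.mk (envRel θ.toSetPartialAction) (1, w)) ∧
      ∃ F : Quot (envRel θ.toSetPartialAction) × unitInterval →
          Quot (envRel θ.toSetPartialAction),
        Continuous F ∧
        (∀ z, F (z, 1) = z) ∧
        (∀ z, F (z, 0) = Quot.mk (envRel θ.toSetPartialAction) (1, w)) ∧
        (∀ (g : G) (z : Quot (envRel θ.toSetPartialAction)) (t : unitInterval),
          F (μ g z, t) = μ g (F (z, t))) := by
  classical
  set q : G × X → Quot (envRel θ.toSetPartialAction) := Quot.mk _ with hq
  -- the enveloping action
  refine ⟨fun g => Quot.lift (fun p => q (g * p.1, p.2)) ?_, ?_, ?_, ?_⟩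
  · rintro ⟨h, x⟩ ⟨h', x'⟩ ⟨hd, ha⟩
    apply Quot.sound
    constructor
    · simpa [mul_assoc, mul_inv_rev] using hd
    · simpa [mul_assoc, mul_inv_rev] using ha
  · intro g' g x; rfl
  · intro g
    apply Quot.sound
    exact ⟨by simpa using (hw g).1, by simpa using (hw g).2⟩
  · -- the contracting homotopy
    refine ⟨fun zt => Quot.lift (fun p => q (p.1, H (p.2, zt.2))) ?_ zt.1, ?_, ?_, ?_, ?_⟩
    · rintro ⟨h, x⟩ ⟨h', x'⟩ ⟨hd, ha⟩
      apply Quot.sound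
      obtain ⟨hd', ha'⟩ := Hequiv (h'⁻¹ * h) x zt.2 hd
      exact ⟨hd', by rw [← ha', ha]⟩
    · -- continuity
      apply (isQuotientMap_quot_mk (r := envRel θ.toSetPartialAction)).continuous_lift_prod_left
      show Continuous fun p : (G × X) × unitInterval => q (p.1.1, H (p.1.2, p.2))
      exact (continuous_quot_mk).comp
        ((continuous_fst.fst).prodMk (Hcont.comp
          ((continuous_fst.snd).prodMk continuous_snd)))
    · intro z
      induction z using Quot.ind with
      | _ p => simp [H1, hq]
    · intro z
      induction z using Quot.ind with
      | _ p =>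
        show q (p.1, H (p.2, 0)) = q (1, w)
        rw [H0]
        apply Quot.sound
        exact ⟨by simpa using (hw p.1).1, by simpa using (hw p.1).2⟩
    · intro g z t
      induction z using Quot.ind with
      | _ p => rfl
end
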